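/- arXiv:2304.07722 — 7 statements merged into one kernel-verified Lean document; each statement's English description precedes it below -/
import Mathlib

section
/- For probability measures P and Q on a measurable space (Ω, H) with P ≪ Q, the supremum over measurable sets A of P(A)/Q(A) equals the essential supremum (with respect to Q) of the Radon–Nikodym derivative dP/dQ. -/
/-!
Since `P A = ∫⁻ x in A, dP/dQ x ∂Q`, the ratio `P A / Q A` is the `Q`-average of `dP/dQ` over
`A`, hence at most its essential supremum. Conversely, for `c` below the essential supremum the set
`{c < dP/dQ}` has positive `Q`-measure, and the average of `dP/dQ` over it is at least `c`.
-/

open MeasureTheory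

namespace MeasureTheory

variable {α : Type*} [MeasurableSpace α]

lemma setLIntegral_le_essSup_mul (f : α → ENNReal) (μ : Measure α) (s : Set α) :
    ∫⁻ x in s, f x ∂μ ≤ essSup f μ * μ s :=
  calc ∫⁻ x in s, f x ∂μ ≤ ∫⁻ _ in s, essSup f μ ∂μ :=
        lintegral_mono_ae (ae_restrict_of_ae (ENNReal.ae_le_essSup f))
    _ = essSup f μ * μ s := setLIntegral_const s _

lemma measure_setOf_lt_ne_zero_of_lt_essSup {β : Type*} [CompleteLinearOrder β]
    {f : α → β} {μ : Measure α} {c : β} (hc : c < essSup f μ) : μ {x | c < f x} ≠ 0 := by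
  intro hμ
  have hf : f ≤ᵐ[μ] fun _ => c := by
    rw [Filter.EventuallyLE, ae_iff]
    simpa only [not_le] using hμ
  exact (essSup_le_of_ae_le c hf).not_gt hc

namespace Measure

variable {μ ν : Measure α}

lemma iSup_measure_div_le_essSup_rnDeriv [HaveLebesgueDecomposition μ ν] [SFinite ν]
    (hμν : μ ≪ ν) :
    (⨆ (s : Set α) (_ : MeasurableSet s), μ s / ν s) ≤ essSup (μ.rnDeriv ν) ν :=
  iSup₂_le fun s _ => ENNReal.div_le_of_le_mul <|
    setLIntegral_rnDeriv hμν s ▸ setLIntegral_le_essSup_mul _ ν s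

lemma essSup_rnDeriv_le_iSup_measure_div [IsFiniteMeasure ν] :
    essSup (μ.rnDeriv ν) ν ≤ ⨆ (s : Set α) (_ : MeasurableSet s), μ s / ν s := by
  refine le_of_forall_lt_imp_le_of_dense fun c hc => ?_
  set s := {x | c < μ.rnDeriv ν x}
  have hs : MeasurableSet s := measurableSet_lt measurable_const (measurable_rnDeriv μ ν)
  have hcs : c * ν s ≤ μ s :=
    calc c * ν s ≤ (⨅ x ∈ s, μ.rnDeriv ν x) * ν s :=
          mul_le_mul_left (le_iInf₂ fun _ hx => le_of_lt hx : c ≤ ⨅ x ∈ s, _) _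
      _ ≤ ∫⁻ x in s, μ.rnDeriv ν x ∂ν := iInf_mul_le_setLIntegral _ hs
      _ ≤ μ s := setLIntegral_rnDeriv_le s
  exact le_iSup₂_of_le s hs <| (ENNReal.le_div_iff_mul_le
    (.inl (measure_setOf_lt_ne_zero_of_lt_essSup hc)) (.inl (measure_ne_top ν s))).2 hcs

end Measure

end MeasureTheory

theorem renyi_inf_sup_ratio_eq_essSup_rnDeriv
    {Ω : Type*} [MeasurableSpace Ω] (P Q : Measure Ω)
    [IsProbabilityMeasure P] [IsProbabilityMeasure Q] (h : P ≪ Q) :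
    (⨆ (A : Set Ω) (_ : MeasurableSet A), P A / Q A) = essSup (P.rnDeriv Q) Q :=
  le_antisymm (Measure.iSup_measure_div_le_essSup_rnDeriv h)
    Measure.essSup_rnDeriv_le_iSup_measure_div
end

section
/- For probability measures P and Q on a measurable space with P ≪ Q, the essential supremum of dP/dQ with respect to P equals the essential supremum of dP/dQ with respect to Q. -/
/-!
Since `P ≪ Q`, every `Q`-a.e. bound is a `P`-a.e. bound, which gives `≤`. Conversely, with
`c = essSup (dP/dQ) P`, the set `{dP/dQ > c}` is `P`-null, hence null for `Q.withDensity (dP/dQ) ≤ P`;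
but `dP/dQ` is positive on that set, so it is `Q`-null as well.
-/

open MeasureTheory

theorem essSup_le_essSup_of_withDensity_le {α : Type*} [MeasurableSpace α] {μ ν : Measure α}
    {f : α → ENNReal} (hf : AEMeasurable f ν) (hle : ν.withDensity f ≤ μ) :
    essSup f ν ≤ essSup f μ := by
  refine essSup_le_of_ae_le _ ?_
  have h_dens : ∀ᵐ x ∂ν.withDensity f, f x ≤ essSup f μ :=
    (Measure.absolutelyContinuous_of_le hle).ae_le ae_le_essSup
  filter_upwards [(ae_withDensity_iff' hf).1 h_dens] with x hx
  by_cases h0 : f x = 0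
  · simp [h0]
  · exact hx h0

theorem essSup_rnDeriv_left_eq_right_general
    {Ω : Type*} [MeasurableSpace Ω] (P Q : Measure Ω)
    (h : P ≪ Q) :
    essSup (P.rnDeriv Q) P = essSup (P.rnDeriv Q) Q :=
  le_antisymm (essSup_mono_measure h)
    (essSup_le_essSup_of_withDensity_le (Measure.measurable_rnDeriv P Q).aemeasurable
      (Measure.withDensity_rnDeriv_le P Q))

theorem essSup_rnDeriv_left_eq_right
    {Ω : Type*} [MeasurableSpace Ω] (P Q : Measure Ω)
    [IsProbabilityMeasure P] [IsProbabilityMeasure Q] (h : P ≪ Q) :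
    essSup (P.rnDeriv Q) P = essSup (P.rnDeriv Q) Q :=
  essSup_rnDeriv_left_eq_right_general P Q h
end

section
/- Let X take values in a countable set E and Y in a countable set F with joint distribution P_{XY}, and fix y ∈ F with P_Y(y) > 0. Then the pointwise maximal leakage, defined as the supremum over all countable-alphabet randomized functions U of X (Markov chain U−X−Y) of log[ sup_{guessing kernels P_{Û|Y}} P(U = Û | Y = y) / max_u P_U(u) ], equals D_∞(P_{X|Y=y} ‖ P_X) = log sup_{x ∈ E} P_{X|Y=y}(x)/P_X(x). -/
open scoped ENNReal

private lemma tsum_option_ennreal {β : Type*} (f : Option β → ℝ≥0∞) :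
    ∑' u : Option β, f u = f none + ∑' b : β, f (some b) := by
  classical
  rw [ENNReal.tsum_eq_add_tsum_ite none]
  congr 1
  refine (((Option.some_injective β).tsum_eq ?_).symm).trans (tsum_congr fun b => ?_)
  · intro u hu
    cases u with
    | none => simp at hu
    | some b => exact ⟨b, rfl⟩
  · simp

/-- Randomized-function view of pointwise maximal leakage for countable alphabets:
the supremum over all countable alphabets `G`, channels `P_{U|X}` and guessing kernels
`P_{Û|Y}` of the log-ratio of posterior to prior guessing probability equals
`D_∞(P_{X|Y=y} ‖ P_X)`. -/
theorem pml_countable_eq_renyi_inf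
    {E F : Type*} [Countable E] [Countable F]
    (pXY : E → F → ℝ≥0∞) (hsum : ∑' x, ∑' y, pXY x y = 1)
    (y : F) (hy : 0 < ∑' x, pXY x y) :
    (⨆ (G : Type) (_ : Countable G) (c : E → G → ℝ≥0∞) (_ : ∀ x, ∑' u, c x u = 1),
        ENNReal.log
          ((⨆ (guess : F → G → ℝ≥0∞) (_ : ∀ y' : F, ∑' u, guess y' u = 1),
              ∑' u : G,
                (∑' x, (pXY x y / ∑' x', pXY x' y) * c x u) * guess y u)
            / ⨆ u : G, ∑' x, (∑' y', pXY x y') * c x u))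
      = ENNReal.log
          (⨆ x : E, (pXY x y / ∑' x', pXY x' y) / ∑' y', pXY x y') := by
  classical
  have hQle1 : ∀ x : E, (∑' y', pXY x y') ≤ 1 := fun x => hsum ▸ ENNReal.le_tsum x
  have hxyQ : ∀ x : E, pXY x y ≤ ∑' y', pXY x y' := fun x => ENNReal.le_tsum y
  set R : ℝ≥0∞ := ⨆ x : E, (pXY x y / ∑' x', pXY x' y) / ∑' y', pXY x y' with hR
  have hPRQ : ∀ x : E, pXY x y / (∑' x', pXY x' y) ≤ R * ∑' y', pXY x y' := by
    intro x
    by_cases hQx : (∑' y', pXY x y') = 0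
    · have h0 : pXY x y = 0 := le_antisymm (hQx ▸ hxyQ x) zero_le
      simp [h0]
    · have hQtop : (∑' y', pXY x y') ≠ ∞ := (lt_of_le_of_lt (hQle1 x) ENNReal.one_lt_top).ne
      calc pXY x y / (∑' x', pXY x' y)
          = (pXY x y / (∑' x', pXY x' y) / ∑' y', pXY x y') * ∑' y', pXY x y' :=
            (ENNReal.div_mul_cancel hQx hQtop).symm
        _ ≤ R * ∑' y', pXY x y' := mul_le_mul_left
            (le_iSup (fun x : E => (pXY x y / ∑' x', pXY x' y) / ∑' y', pXY x y') x) _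
  refine le_antisymm ?_ ?_
  · -- upper bound
    refine iSup_le fun G => iSup_le fun _ => iSup_le fun c => iSup_le fun hc => ?_
    rw [ENNReal.log_le_log_iff]
    refine ENNReal.div_le_of_le_mul ?_
    refine iSup_le fun guess => iSup_le fun hg => ?_
    calc ∑' u : G, (∑' x, (pXY x y / ∑' x', pXY x' y) * c x u) * guess y u
        ≤ ∑' u : G, (R * ⨆ u' : G, ∑' x, (∑' y', pXY x y') * c x u') * guess y u := by
          refine ENNReal.tsum_le_tsum fun u => mul_le_mul_left ?_ _
          calc (∑' x, (pXY x y / ∑' x', pXY x' y) * c x u)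
              ≤ ∑' x, ((R * ∑' y', pXY x y') * c x u) :=
                ENNReal.tsum_le_tsum fun x => mul_le_mul_left (hPRQ x) _
            _ = R * ∑' x, (∑' y', pXY x y') * c x u := by
                simp_rw [mul_assoc]; exact ENNReal.tsum_mul_left
            _ ≤ R * ⨆ u' : G, ∑' x, (∑' y', pXY x y') * c x u' :=
                mul_le_mul_right
                  (le_iSup (fun u' : G => ∑' x, (∑' y', pXY x y') * c x u') u) _
      _ = (R * ⨆ u' : G, ∑' x, (∑' y', pXY x y') * c x u') * ∑' u : G, guess y u :=
            ENNReal.tsum_mul_left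
      _ = R * ⨆ u' : G, ∑' x, (∑' y', pXY x y') * c x u' := by rw [hg y, mul_one]
  · -- lower bound
    have hlog : ENNReal.log R
        = ⨆ x : E, ENNReal.log ((pXY x y / ∑' x', pXY x' y) / ∑' y', pXY x y') := by
      rw [hR]
      have h := OrderIso.map_iSup ENNReal.logOrderIso
        (fun x : E => (pXY x y / ∑' x', pXY x' y) / ∑' y', pXY x y')
      simp only [ENNReal.logOrderIso_apply] at h
      exact h
    rw [hlog]
    refine iSup_le fun x₀ => ?_
    by_cases h0 : pXY x₀ y = 0
    · simp only [h0, ENNReal.zero_div, ENNReal.log_zero]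
      exact bot_le
    · have hQ0 : (∑' y', pXY x₀ y') ≠ 0 := fun h => h0 (le_antisymm (h ▸ hxyQ x₀) zero_le)
      obtain ⟨n, hn⟩ := ENNReal.exists_inv_nat_lt hQ0
      have hn0 : (n : ℝ≥0∞) ≠ 0 := by
        intro h
        rw [h, ENNReal.inv_zero] at hn
        exact absurd (hn.trans_le (hQle1 x₀)) (by simp)
      have hntop : (n : ℝ≥0∞) ≠ ∞ := ENNReal.natCast_ne_top n
      obtain ⟨e, he⟩ := Countable.exists_injective_nat E
      set c : E → Option (ℕ × Fin n) → ℝ≥0∞ := fun x u =>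
        match u with
        | none => if x = x₀ then 1 else 0
        | some p => if x ≠ x₀ ∧ p.1 = e x then ((n : ℝ≥0∞))⁻¹ else 0
        with hcdef
      have hcnone : ∀ x : E, c x none = if x = x₀ then 1 else 0 := fun x => rfl
      have hcsome : ∀ (x : E) (p : ℕ × Fin n),
          c x (some p) = if x ≠ x₀ ∧ p.1 = e x then ((n : ℝ≥0∞))⁻¹ else 0 := fun x p => rfl
      have hc : ∀ x : E, ∑' u : Option (ℕ × Fin n), c x u = 1 := by
        intro x
        rw [tsum_option_ennreal, hcnone]
        by_cases hx : x = x₀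
        · rw [if_pos hx]
          have h2 : ∀ p : ℕ × Fin n, c x (some p) = 0 := fun p => by
            rw [hcsome]; exact if_neg (by simp [hx])
          simp [h2]
        · rw [if_neg hx, zero_add]
          calc ∑' p : ℕ × Fin n, c x (some p)
              = ∑' m : ℕ, ∑' k : Fin n, c x (some (m, k)) := ENNReal.tsum_prod'
            _ = ∑' m : ℕ, (if m = e x then (n : ℝ≥0∞) * ((n : ℝ≥0∞))⁻¹ else 0) := by
                refine tsum_congr fun m => ?_
                by_cases hm : m = e x
                · simp [hcsome, hx, hm, tsum_fintype, Finset.sum_const, mul_comm]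
                · simp [hcsome, hx, hm]
            _ = (n : ℝ≥0∞) * ((n : ℝ≥0∞))⁻¹ := tsum_ite_eq _ _
            _ = 1 := ENNReal.mul_inv_cancel hn0 hntop
      have hAnone : (∑' x, (pXY x y / ∑' x', pXY x' y) * c x none)
          = pXY x₀ y / ∑' x', pXY x' y := by
        rw [tsum_eq_single x₀ (fun x hx => by
          rw [hcnone, if_neg hx, mul_zero])]
        rw [hcnone, if_pos rfl, mul_one]
      have hBnone : (∑' x, (∑' y', pXY x y') * c x none) = ∑' y', pXY x₀ y' := by
        rw [tsum_eq_single x₀ (fun x hx => by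
          rw [hcnone, if_neg hx, mul_zero])]
        rw [hcnone, if_pos rfl, mul_one]
      have hden : (⨆ u : Option (ℕ × Fin n), ∑' x, (∑' y', pXY x y') * c x u)
          ≤ ∑' y', pXY x₀ y' := by
        refine iSup_le fun u => ?_
        match u with
        | none => exact le_of_eq hBnone
        | some (m, k) =>
          by_cases hex : ∃ x₁ : E, x₁ ≠ x₀ ∧ m = e x₁
          · obtain ⟨x₁, hx₁, hm⟩ := hex
            have heq : (∑' x, (∑' y', pXY x y') * c x (some (m, k)))
                = (∑' y', pXY x₁ y') * c x₁ (some (m, k)) := by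
              refine tsum_eq_single x₁ fun x hx => ?_
              rw [hcsome]
              rw [if_neg, mul_zero]
              rintro ⟨hxx0, hmx⟩
              exact hx (he (hmx.symm.trans hm))
            rw [heq, hcsome, if_pos ⟨hx₁, hm⟩]
            calc (∑' y', pXY x₁ y') * ((n : ℝ≥0∞))⁻¹
                ≤ 1 * ((n : ℝ≥0∞))⁻¹ := mul_le_mul_left (hQle1 x₁) _
              _ = ((n : ℝ≥0∞))⁻¹ := one_mul _
              _ ≤ ∑' y', pXY x₀ y' := hn.le
          · have heq : (∑' x, (∑' y', pXY x y') * c x (some (m, k))) = 0 := by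
              refine ENNReal.tsum_eq_zero.mpr fun x => ?_
              rw [hcsome, if_neg, mul_zero]
              rintro ⟨hxx0, hmx⟩
              exact hex ⟨x, hxx0, hmx⟩
            rw [heq]
            exact zero_le
      have hnum : pXY x₀ y / (∑' x', pXY x' y)
          ≤ ⨆ (guess : F → Option (ℕ × Fin n) → ℝ≥0∞)
              (_ : ∀ y' : F, ∑' u, guess y' u = 1),
              ∑' u : Option (ℕ × Fin n),
                (∑' x, (pXY x y / ∑' x', pXY x' y) * c x u) * guess y u := by
        set guess : F → Option (ℕ × Fin n) → ℝ≥0∞ :=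
          fun _ u => if u = none then 1 else 0 with hgdef
        have hguess : ∀ y' : F, ∑' u : Option (ℕ × Fin n), guess y' u = 1 :=
          fun y' => tsum_ite_eq _ _
        refine le_iSup_of_le guess (le_iSup_of_le hguess (le_of_eq ?_))
        rw [tsum_eq_single none (fun u hu => by
          have : guess y u = 0 := if_neg hu
          rw [this, mul_zero])]
        have : guess y none = 1 := rfl
        rw [this, mul_one, hAnone]
      refine le_iSup_of_le (Option (ℕ × Fin n))
        (le_iSup_of_le inferInstance (le_iSup_of_le c (le_iSup_of_le hc ?_)))
      rw [ENNReal.log_le_log_iff]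
      exact ENNReal.div_le_div hnum hden
end

section
/- (Measurability of the essential supremum) Let (E, E) and (F, F) be measurable spaces, s : E × F → [0,∞] jointly measurable, and P_X a probability measure on (E, E). Then the function t : F → [0,∞] defined by t(y) = ess sup_{P_X} s(·, y) = sup{c ≥ 0 : P_X({x : s(x,y) > c}) > 0} is F-measurable. -/
open MeasureTheory
open scoped ENNReal

/-- Measurability of the essential supremum: if `s` is jointly measurable, then
`y ↦ essSup_{P_X} s(·, y)` is measurable. -/
theorem measurable_essSup_of_jointly_measurable
    {E F : Type*} [MeasurableSpace E] [MeasurableSpace F]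
    (PX : Measure E) [IsProbabilityMeasure PX]
    (s : E × F → ℝ≥0∞) (hs : Measurable s) :
    Measurable (fun y : F => essSup (fun x : E => s (x, y)) PX) := by
  have key : ∀ y : F, essSup (fun x : E => s (x, y)) PX
      = ⨆ q : ℚ, {y : F | PX ((fun x => (x, y)) ⁻¹' {p | ((Real.toNNReal q : ℝ≥0∞)) < s p}) ≠ 0}.indicator
          (fun _ => ((Real.toNNReal q : ℝ≥0∞))) y := by
    intro y
    set f : E → ℝ≥0∞ := fun x => s (x, y) with hf
    have hpre : ∀ q : ℚ, ((fun x => (x, y)) ⁻¹' {p | ((Real.toNNReal q : ℝ≥0∞)) < s p})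
        = {x : E | ((Real.toNNReal q : ℝ≥0∞)) < f x} := fun q => rfl
    rw [essSup_eq_sInf]
    apply le_antisymm
    · by_contra h
      push_neg at h
      rcases ENNReal.lt_iff_exists_rat_btwn.1 h with ⟨q, _, hq1, hq2⟩
      have hq2' : (((Real.toNNReal q : ℝ≥0∞))) ∉
          {a : ℝ≥0∞ | PX {x | a < f x} = 0} := by
        intro hmem
        exact absurd (sInf_le hmem) (not_le.2 hq2)
      have hne : PX {x : E | ((Real.toNNReal q : ℝ≥0∞)) < f x} ≠ 0 := hq2'
      have : ((Real.toNNReal q : ℝ≥0∞)) ≤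
          ⨆ q : ℚ, {y : F | PX ((fun x => (x, y)) ⁻¹' {p | ((Real.toNNReal q : ℝ≥0∞)) < s p}) ≠ 0}.indicator
            (fun _ => ((Real.toNNReal q : ℝ≥0∞))) y := by
        refine le_trans ?_ (le_iSup _ q)
        rw [Set.indicator_of_mem]
        simpa [hpre q] using hne
      exact absurd this (not_le.2 hq1)
    · refine iSup_le fun q => ?_
      by_cases hmem : y ∈ {y : F | PX ((fun x => (x, y)) ⁻¹' {p | ((Real.toNNReal q : ℝ≥0∞)) < s p}) ≠ 0}
      · rw [Set.indicator_of_mem hmem]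
        refine le_sInf fun b hb => ?_
        by_contra hlt
        push_neg at hlt
        have hne : PX {x : E | ((Real.toNNReal q : ℝ≥0∞)) < f x} ≠ 0 := by
          simpa [hpre q] using hmem
        exact hne (measure_mono_null (fun x hx => lt_of_le_of_lt hlt.le hx) hb)
      · rw [Set.indicator_of_notMem hmem]
        exact zero_le
  simp_rw [key]
  refine Measurable.iSup fun q => ?_
  have hset : MeasurableSet {p : E × F | ((Real.toNNReal q : ℝ≥0∞)) < s p} :=
    hs measurableSet_Ioi
  have hmeas : Measurable fun y : F =>
      PX ((fun x => (x, y)) ⁻¹' {p | ((Real.toNNReal q : ℝ≥0∞)) < s p}) :=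
    measurable_measure_prodMk_right hset
  exact Measurable.indicator measurable_const ((hmeas (measurableSet_singleton 0)).compl)
end

section
/- (Measurability of PML) In the disintegration setting, the map y ↦ D_∞(P_{X|Y=y} ‖ P_X), extended to equal +∞ on {y : ∫_{{r=0}} k(x,y) μ(dx) > 0}, is F-measurable. Equivalently, y ↦ log ess sup_{P_X} k(·,y)/r(·) (with the ∞ extension) is measurable. -/
open MeasureTheory
open scoped ENNReal

/-! `q`, `r` and `(y, x) ↦ k x y` are measurable as partial integrals of `p` (Tonelli), and
integrating out `x` against an s-finite measure preserves joint measurability. The essential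
supremum does too, because it is a countable infimum: over rational levels `c`, of `c` when
`{c < f}` is null and `∞` otherwise. -/

lemma essSup_eq_iInf_rat {α : Type*} [MeasurableSpace α] (m : Measure α) (f : α → ℝ≥0∞) :
    essSup f m = ⨅ c : ℚ, if m {x | ENNReal.ofReal c < f x} = 0 then ENNReal.ofReal c else ∞ := by
  rw [essSup_eq_sInf]
  refine le_antisymm (le_iInf fun c => ?_) ?_
  · split_ifs with h
    · exact sInf_le h
    · exact le_top
  · by_contra! hlt
    obtain ⟨a, ha_null, ha_lt⟩ := sInf_lt_iff.mp hlt
    obtain ⟨c, -, hac, hc_lt⟩ := ENNReal.lt_iff_exists_rat_btwn.mp ha_lt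
    have hc_null : m {x | ENNReal.ofReal c < f x} = 0 :=
      measure_mono_null (fun x hx => hac.trans hx) ha_null
    have hle := iInf_le (fun c : ℚ =>
      if m {x | ENNReal.ofReal c < f x} = 0 then ENNReal.ofReal c else ∞) c
    rw [if_pos hc_null] at hle
    exact (hle.trans_lt hc_lt).false

lemma Measurable.essSup_right {α β : Type*} [MeasurableSpace α] [MeasurableSpace β]
    {m : Measure β} [SFinite m] {f : α → β → ℝ≥0∞} (hf : Measurable (Function.uncurry f)) :
    Measurable fun a => essSup (f a) m := by
  simp only [essSup_eq_iInf_rat]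
  refine .iInf fun c => .ite ?_ measurable_const measurable_const
  exact measurable_measure_prodMk_left (measurableSet_lt measurable_const hf)
    (measurableSet_singleton 0)

theorem pml_measurable_general
    {E F : Type*} [MeasurableSpace E] [MeasurableSpace F]
    (μ : Measure E) (ν : Measure F) [SigmaFinite μ] [SigmaFinite ν]
    (p : E × F → ℝ≥0∞) (hp : Measurable p)
    (q : F → ℝ≥0∞) (hq : ∀ y, q y = ∫⁻ x, p (x, y) ∂μ)
    (r : E → ℝ≥0∞) (hr : ∀ x, r x = ∫⁻ y, p (x, y) ∂ν)
    (k : E → F → ℝ≥0∞)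
    (hk : ∀ x y, k x y = if 0 < q y then p (x, y) / q y else r x) :
    Measurable (fun y : F => ENNReal.log
      (if (∫⁻ x in {x : E | r x = 0}, k x y ∂μ) = 0 then
        essSup (fun x : E => k x y / r x) (μ.withDensity r)
      else ∞)) := by
  have hq_meas : Measurable q := funext hq ▸ hp.lintegral_prod_left'
  have hr_meas : Measurable r := funext hr ▸ hp.lintegral_prod_right'
  have hk_meas : Measurable fun yx : F × E => k yx.2 yx.1 := by
    simp only [hk]
    exact .ite (measurableSet_lt measurable_const (hq_meas.comp measurable_fst))
      ((hp.comp measurable_swap).div (hq_meas.comp measurable_fst)) (hr_meas.comp measurable_snd)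
  have hnull : MeasurableSet {y | ∫⁻ x in {x : E | r x = 0}, k x y ∂μ = 0} :=
    hk_meas.lintegral_prod_right' (measurableSet_singleton 0)
  have hess : Measurable fun y => essSup (fun x => k x y / r x) (μ.withDensity r) :=
    Measurable.essSup_right (f := fun y x => k x y / r x)
      (hk_meas.div (hr_meas.comp measurable_snd))
  exact ENNReal.measurable_log.comp (.ite hnull hess measurable_const)

/-- Measurability of pointwise maximal leakage: in the disintegration setting, the map
`y ↦ D_∞(P_{X|Y=y} ‖ P_X) = log essSup_{P_X} k(·,y)/r(·)`, extended to `+∞` on the set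
`{y : ∫_{{r=0}} k(x,y) μ(dx) > 0}` (where absolute continuity fails), is measurable. -/
theorem pml_measurable
    {E F : Type*} [MeasurableSpace E] [MeasurableSpace F]
    (μ : Measure E) (ν : Measure F) [SigmaFinite μ] [SigmaFinite ν]
    (p : E × F → ℝ≥0∞) (hp : Measurable p)
    (PXY : Measure (E × F)) [IsProbabilityMeasure PXY]
    (hPXY : PXY = (μ.prod ν).withDensity p)
    (q : F → ℝ≥0∞) (hq : ∀ y, q y = ∫⁻ x, p (x, y) ∂μ)
    (r : E → ℝ≥0∞) (hr : ∀ x, r x = ∫⁻ y, p (x, y) ∂ν)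
    (k : E → F → ℝ≥0∞)
    (hk : ∀ x y, k x y = if 0 < q y then p (x, y) / q y else r x) :
    Measurable (fun y : F => ENNReal.log
      (if (∫⁻ x in {x : E | r x = 0}, k x y ∂μ) = 0 then
        essSup (fun x : E => k x y / r x) (μ.withDensity r)
      else ∞)) :=
  pml_measurable_general μ ν p hp q hq r hr k hk
end

section
/- (Poisson–binomial posterior) Let λ > 1, p ∈ (0,1) with λ(1−p) < 1. Let X ~ Poisson(λp) and Y = X + Z with Z ~ Poisson(λ(1−p)) independent of X. Then X | Y = y ~ Binomial(y, p), and the PML from X to y ∈ ℕ equals log( e^{λp} λ^{−y} y! ), i.e., max_{x ∈ {0,...,y}} P_{X|Y=y}(x)/P_X(x) = e^{λp} λ^{−y} y!. -/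
open Nat

/-- The Poisson pmf with rate `r`. -/
noncomputable def poisPMF (r : ℝ) (n : ℕ) : ℝ :=
  Real.exp (-r) * r ^ n / (Nat.factorial n)

lemma aux_part1 (l p : ℝ) (hl : 1 < l) (hp : p ∈ Set.Ioo (0 : ℝ) 1) {x y : ℕ} (hxy : x ≤ y) :
    poisPMF (l * p) x * poisPMF (l * (1 - p)) (y - x) / poisPMF l y
      = (y.choose x) * p ^ x * (1 - p) ^ (y - x) := by
  obtain ⟨k, rfl⟩ : ∃ k, y = x + k := ⟨y - x, by omega⟩
  have hkx : x + k - x = k := by omega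
  rw [hkx]
  have hch : ((x + k).choose x : ℝ) = (x + k)! / (x ! * k !) := by
    rw [Nat.cast_choose ℝ (by omega : x ≤ x + k), hkx]
  have hx : (x ! : ℝ) ≠ 0 := Nat.cast_ne_zero.2 (Nat.factorial_ne_zero x)
  have hk : (k ! : ℝ) ≠ 0 := Nat.cast_ne_zero.2 (Nat.factorial_ne_zero k)
  have hxk : ((x + k)! : ℝ) ≠ 0 := Nat.cast_ne_zero.2 (Nat.factorial_ne_zero _)
  have hl0 : l ≠ 0 := by linarith
  have hexp : Real.exp (-(l * p)) * Real.exp (-(l * (1 - p))) = Real.exp (-l) := by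
    rw [← Real.exp_add]; ring_nf
  unfold poisPMF
  rw [hch]
  have hpow : l ^ (x + k) = l ^ x * l ^ k := pow_add l x k
  have he : Real.exp (-l) ≠ 0 := Real.exp_ne_zero _
  field_simp
  rw [hpow]
  rw [mul_pow l p x, mul_pow l (1 - p) k, ← hexp]
  ring


lemma aux_part2 (l p : ℝ) (hl : 1 < l) (hp : p ∈ Set.Ioo (0 : ℝ) 1) {x y : ℕ} (hxy : x ≤ y) :
    ((y.choose x) * p ^ x * (1 - p) ^ (y - x)) / poisPMF (l * p) x
      = Real.exp (l * p) * l ^ (-(y : ℤ)) * (Nat.factorial y)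
        * ((l * (1 - p)) ^ (y - x) / (Nat.factorial (y - x))) := by
  obtain ⟨k, rfl⟩ : ∃ k, y = x + k := ⟨y - x, by omega⟩
  have hkx : x + k - x = k := by omega
  rw [hkx]
  have hch : ((x + k).choose x : ℝ) = (x + k)! / (x ! * k !) := by
    rw [Nat.cast_choose ℝ (by omega : x ≤ x + k), hkx]
  have hx : (x ! : ℝ) ≠ 0 := Nat.cast_ne_zero.2 (Nat.factorial_ne_zero x)
  have hk : (k ! : ℝ) ≠ 0 := Nat.cast_ne_zero.2 (Nat.factorial_ne_zero k)
  have hl0 : l ≠ 0 := by linarith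
  have hp0 : p ≠ 0 := ne_of_gt hp.1
  have hz : l ^ (-((x + k : ℕ) : ℤ)) = (l ^ (x + k))⁻¹ := by
    rw [zpow_neg, zpow_natCast]
  have he : Real.exp (-(l * p)) ≠ 0 := Real.exp_ne_zero _
  have hee : Real.exp (l * p) * Real.exp (-(l * p)) = 1 := by
    rw [← Real.exp_add]; ring_nf; exact Real.exp_zero
  unfold poisPMF
  rw [hch, hz, pow_add l x k]
  have hlx : l ^ x ≠ 0 := pow_ne_zero _ hl0
  have hlk : l ^ k ≠ 0 := pow_ne_zero _ hl0
  field_simp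
  rw [mul_comm p l, mul_comm (1 - p) l, mul_pow l p x, mul_pow l (1 - p) k]
  linear_combination (-(p ^ x * (1 - p) ^ k * l ^ x * l ^ k)) * hee

/-- Poisson–binomial posterior: if `X ~ Poisson(λp)` and `Y = X + Z` with
`Z ~ Poisson(λ(1-p))` independent of `X`, then `X | Y = y ~ Binomial(y, p)`, and the
maximal posterior-to-prior ratio over `x ∈ {0,…,y}` equals `e^{λp} λ^{-y} y!`; hence
the PML from `X` to `y` is `log(e^{λp} λ^{-y} y!)`. -/
theorem pml_poisson_binomial (l p : ℝ) (hl : 1 < l) (hp : p ∈ Set.Ioo (0 : ℝ) 1)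
    (hlp : l * (1 - p) < 1) (y : ℕ) :
    (∀ x : ℕ, x ≤ y →
      poisPMF (l * p) x * poisPMF (l * (1 - p)) (y - x) / poisPMF l y
        = (y.choose x) * p ^ x * (1 - p) ^ (y - x)) ∧
    (⨆ x : Fin (y + 1),
        ((y.choose (x : ℕ)) * p ^ (x : ℕ) * (1 - p) ^ (y - (x : ℕ)))
          / poisPMF (l * p) (x : ℕ))
      = Real.exp (l * p) * l ^ (-(y : ℤ)) * (Nat.factorial y) ∧
    Real.log (⨆ x : Fin (y + 1),
        ((y.choose (x : ℕ)) * p ^ (x : ℕ) * (1 - p) ^ (y - (x : ℕ)))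
          / poisPMF (l * p) (x : ℕ))
      = Real.log (Real.exp (l * p) * l ^ (-(y : ℤ)) * (Nat.factorial y)) := by
  refine ⟨fun x hx => aux_part1 l p hl hp hx, ?_⟩
  have key : (⨆ x : Fin (y + 1),
        ((y.choose (x : ℕ)) * p ^ (x : ℕ) * (1 - p) ^ (y - (x : ℕ)))
          / poisPMF (l * p) (x : ℕ))
      = Real.exp (l * p) * l ^ (-(y : ℤ)) * (Nat.factorial y) := by
    set E : ℝ := Real.exp (l * p) * l ^ (-(y : ℤ)) * (Nat.factorial y) with hE
    have hE0 : 0 < E := by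
      apply mul_pos (mul_pos (Real.exp_pos _) (zpow_pos (by linarith) _))
      exact_mod_cast Nat.factorial_pos y
    have hq0 : 0 ≤ l * (1 - p) := by nlinarith [hp.2]
    have hq1 : l * (1 - p) ≤ 1 := le_of_lt hlp
    apply le_antisymm
    · apply ciSup_le
      intro x
      rw [aux_part2 l p hl hp (by omega : (x : ℕ) ≤ y)]
      have h1 : (l * (1 - p)) ^ (y - (x : ℕ)) / ((y - (x : ℕ))! : ℝ) ≤ 1 := by
        apply div_le_one_of_le₀
        · calc (l * (1 - p)) ^ (y - (x : ℕ)) ≤ 1 := pow_le_one₀ hq0 hq1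
            _ ≤ ((y - (x : ℕ))! : ℝ) := by exact_mod_cast Nat.one_le_iff_ne_zero.2 (Nat.factorial_ne_zero _)
        · positivity
      nlinarith
    · have hb : BddAbove (Set.range fun x : Fin (y + 1) =>
          ((y.choose (x : ℕ)) * p ^ (x : ℕ) * (1 - p) ^ (y - (x : ℕ)))
            / poisPMF (l * p) (x : ℕ)) := Set.Finite.bddAbove (Set.finite_range _)
      have := le_ciSup hb (⟨y, by omega⟩ : Fin (y + 1))
      simp only at this
      rw [aux_part2 l p hl hp (le_refl y)] at this
      rw [hE, zpow_neg, zpow_natCast]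
      simpa using this
  exact ⟨key, by rw [key]⟩
end

section
/- (Bivariate Gaussian) Let X, Y be zero-mean jointly Gaussian with variances σ_X², σ_Y² and correlation coefficient ρ ∈ (−1,1), ρ ≠ 0. Then the PML from X to y ∈ ℝ equals y²/(2σ_Y²) − (1/2) log(1 − ρ²); i.e., sup_{x ∈ ℝ} f_{Y|X=x}(y)/f_Y(y) = exp(y²/(2σ_Y²)) / √(1 − ρ²). -/
open Real

noncomputable def gaussDensity (m v y : ℝ) : ℝ :=
  (Real.sqrt (2 * π * v))⁻¹ * Real.exp (-(y - m) ^ 2 / (2 * v))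

lemma ratio_eq (sY ρ y m : ℝ) (hsY : 0 < sY) (h1 : 0 < 1 - ρ ^ 2) :
    gaussDensity m ((1 - ρ ^ 2) * sY ^ 2) y / gaussDensity 0 (sY ^ 2) y
      = (Real.sqrt (1 - ρ ^ 2))⁻¹ *
        Real.exp (y ^ 2 / (2 * sY ^ 2) - (y - m) ^ 2 / (2 * ((1 - ρ ^ 2) * sY ^ 2))) := by
  unfold gaussDensity
  rw [show (2 * π * ((1 - ρ ^ 2) * sY ^ 2)) = (1 - ρ ^ 2) * (2 * π * sY ^ 2) by ring,
    Real.sqrt_mul h1.le]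
  have hs1 : Real.sqrt (1 - ρ ^ 2) ≠ 0 := by positivity
  have hs2 : Real.sqrt (2 * π * sY ^ 2) ≠ 0 := by positivity
  rw [mul_inv, div_eq_iff (by positivity)]
  rw [mul_mul_mul_comm, ← Real.exp_add]
  congr 1
  field_simp
  ring

/-- Bivariate Gaussian: for zero-mean jointly Gaussian `(X, Y)` with variances
`σ_X², σ_Y²` and correlation `ρ ≠ 0`, one has
`sup_x f_{Y|X=x}(y)/f_Y(y) = exp(y²/(2σ_Y²))/√(1-ρ²)`, hence the PML from `X` to `y`
equals `y²/(2σ_Y²) − (1/2) log(1-ρ²)`. -/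
theorem pml_bivariate_gaussian (sX sY ρ : ℝ) (hsX : 0 < sX) (hsY : 0 < sY)
    (hρ : ρ ∈ Set.Ioo (-1 : ℝ) 1) (hρ0 : ρ ≠ 0) (y : ℝ) :
    (⨆ x : ℝ,
        gaussDensity (sY / sX * ρ * x) ((1 - ρ ^ 2) * sY ^ 2) y
          / gaussDensity 0 (sY ^ 2) y)
      = Real.exp (y ^ 2 / (2 * sY ^ 2)) / Real.sqrt (1 - ρ ^ 2) ∧
    Real.log (⨆ x : ℝ,
        gaussDensity (sY / sX * ρ * x) ((1 - ρ ^ 2) * sY ^ 2) y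
          / gaussDensity 0 (sY ^ 2) y)
      = y ^ 2 / (2 * sY ^ 2) - (1 / 2) * Real.log (1 - ρ ^ 2) := by
  have h1 : 0 < 1 - ρ ^ 2 := by nlinarith [hρ.1, hρ.2]
  have hbound : ∀ x : ℝ,
      gaussDensity (sY / sX * ρ * x) ((1 - ρ ^ 2) * sY ^ 2) y / gaussDensity 0 (sY ^ 2) y
        ≤ Real.exp (y ^ 2 / (2 * sY ^ 2)) / Real.sqrt (1 - ρ ^ 2) := by
    intro x
    rw [ratio_eq sY ρ y _ hsY h1, show Real.exp (y ^ 2 / (2 * sY ^ 2)) / Real.sqrt (1 - ρ ^ 2)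
      = (Real.sqrt (1 - ρ ^ 2))⁻¹ * Real.exp (y ^ 2 / (2 * sY ^ 2)) by rw [inv_mul_eq_div]]
    refine mul_le_mul_of_nonneg_left ?_ (inv_nonneg.2 (Real.sqrt_nonneg _))
    have h0 : (0:ℝ) ≤ (y - sY / sX * ρ * x) ^ 2 / (2 * ((1 - ρ ^ 2) * sY ^ 2)) := by positivity
    exact Real.exp_le_exp.2 (by linarith)
  have hatt : gaussDensity (sY / sX * ρ * (y * sX / (sY * ρ))) ((1 - ρ ^ 2) * sY ^ 2) y
      / gaussDensity 0 (sY ^ 2) y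
        = Real.exp (y ^ 2 / (2 * sY ^ 2)) / Real.sqrt (1 - ρ ^ 2) := by
    rw [ratio_eq sY ρ y _ hsY h1]
    have hm : sY / sX * ρ * (y * sX / (sY * ρ)) = y := by
      field_simp
    rw [hm]
    norm_num [inv_mul_eq_div]
  have hsup : (⨆ x : ℝ,
      gaussDensity (sY / sX * ρ * x) ((1 - ρ ^ 2) * sY ^ 2) y
        / gaussDensity 0 (sY ^ 2) y)
      = Real.exp (y ^ 2 / (2 * sY ^ 2)) / Real.sqrt (1 - ρ ^ 2) := by
    refine le_antisymm (ciSup_le hbound) ?_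
    exact hatt ▸ le_ciSup ⟨_, Set.forall_mem_range.2 hbound⟩ (y * sX / (sY * ρ))
  refine ⟨hsup, ?_⟩
  rw [hsup, Real.log_div (Real.exp_ne_zero _) (by positivity), Real.log_exp,
    Real.log_sqrt h1.le]
  ring
end
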